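/- Let w be a point of the open unit disc 𝔻 and let f(z) := (w − z)/(1 − conj(w)·z) be the conformal automorphism of 𝔻 interchanging the origin and w. Then Bf(z) = (|w|² − 1)/(1 − conj(w)·z), and sup_{z∈𝔻} |Bf(z)| = 1 + |w|, while sup_{z∈𝔻} |f(z)| = 1; that is, ‖Bf‖_∞ = (1 + |w|)·‖f‖_∞. -/

import Mathlib

open MeasureTheory Real Set

noncomputable section

/-- The backward shift operator: `Bf(z) = (f(z) - f(0))/z` for `z ≠ 0`, `Bf(0) = f'(0)`. -/
def bwdShift (f : ℂ → ℂ) : ℂ → ℂ :=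
  fun z => if z = 0 then deriv f 0 else (f z - f 0) / z

/-- The point `r·e^{iθ}`. -/
def circlePoint (r θ : ℝ) : ℂ := (r : ℂ) * Complex.exp ((θ : ℂ) * Complex.I)

/-- The integral mean `(1/2π)∫₀^{2π} |f(re^{iθ})| dθ`. -/
def hardyMean1 (f : ℂ → ℂ) (r : ℝ) : ℝ :=
  (2 * π)⁻¹ * ∫ θ in (0:ℝ)..(2 * π), ‖f (circlePoint r θ)‖

/-- Membership in the Hardy space `H¹` of the unit disc. -/
def MemHardy1 (f : ℂ → ℂ) : Prop :=
  DifferentiableOn ℂ f (Metric.ball (0:ℂ) 1) ∧ BddAbove (hardyMean1 f '' Set.Ioo 0 1)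

/-- The `H¹` norm: `sup_{0<r<1} (1/2π)∫₀^{2π} |f(re^{iθ})| dθ`. -/
def hardyNorm1 (f : ℂ → ℂ) : ℝ := sSup (hardyMean1 f '' Set.Ioo 0 1)

/-- `g` gives the radial boundary values of `f` for a.e. `θ ∈ (0, 2π]`. -/
def IsRadialLimit (f : ℂ → ℂ) (g : ℝ → ℂ) : Prop :=
  ∀ᵐ θ ∂(volume.restrict (Set.Ioc (0:ℝ) (2 * π))),
    Filter.Tendsto (fun r : ℝ => f (circlePoint r θ)) (nhdsWithin 1 (Set.Iio 1)) (nhds (g θ))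

/-- `I` is an inner function: bounded analytic on the disc with unimodular radial
boundary values almost everywhere. -/
def IsInnerFn (I : ℂ → ℂ) : Prop :=
  DifferentiableOn ℂ I (Metric.ball (0:ℂ) 1) ∧
  (∀ z ∈ Metric.ball (0:ℂ) 1, ‖I z‖ ≤ 1) ∧
  ∀ᵐ θ ∂(volume.restrict (Set.Ioc (0:ℝ) (2 * π))),
    ∃ w : ℂ, ‖w‖ = 1 ∧
      Filter.Tendsto (fun r : ℝ => I (circlePoint r θ)) (nhdsWithin 1 (Set.Iio 1)) (nhds w)

/-- The pointwise principal square root: `0` at `0`, and `√|w|·e^{i·Arg(w)/2}` otherwise. -/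
def psqrt (w : ℂ) : ℂ :=
  if w = 0 then 0
  else (Real.sqrt (‖w‖) : ℂ) * Complex.exp (((w.arg / 2 : ℝ) : ℂ) * Complex.I)

end

/-- The sup norm over the unit disc. -/
noncomputable def hInfNorm (f : ℂ → ℂ) : ℝ :=
  sSup ((fun z => ‖f z‖) '' Metric.ball (0:ℂ) 1)

/-! The identity `|1 - w̄z|² - |w - z|² = (1 - |w|²)(1 - |z|²)` shows that `f` maps the closed
disc into itself and the unit circle onto itself, so `‖f‖_∞ = 1`. Since `f(0) = w`, the difference
quotient is `Bf(z) = (|w|² - 1)/(1 - w̄z)`, whose modulus is largest at the boundary point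
`z = w/|w|`, where it equals `(1 - |w|²)/(1 - |w|) = 1 + |w|`. Both suprema over the open disc are
attained at boundary points, by continuity up to the circle. -/

open ComplexConjugate

theorem csSup_image_eq_of_mem_closure {X : Type*} [TopologicalSpace X] {s : Set X} {g : X → ℝ}
    {M : ℝ} {ζ : X} (hζ : ζ ∈ closure s) (hg : ContinuousWithinAt g s ζ)
    (hle : ∀ x ∈ s, g x ≤ M) (hgζ : g ζ = M) : sSup (g '' s) = M := by
  have hub : M ∈ upperBounds (g '' s) := by
    rintro _ ⟨x, hx, rfl⟩
    exact hle x hx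
  exact (isLUB_of_mem_closure hub (hgζ ▸ hg.mem_closure_image hζ)).csSup_eq
    ((closure_nonempty_iff.mp ⟨ζ, hζ⟩).image g)

theorem hInfNorm_eq_of_norm_eq_on_sphere {g : ℂ → ℂ} {M : ℝ} {ζ : ℂ}
    (hg : ContinuousOn g (Metric.closedBall 0 1)) (hle : ∀ z ∈ Metric.ball (0 : ℂ) 1, ‖g z‖ ≤ M)
    (hζ : ‖ζ‖ = 1) (hgζ : ‖g ζ‖ = M) : hInfNorm g = M := by
  have hζ_closure : ζ ∈ closure (Metric.ball (0 : ℂ) 1) := by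
    rw [closure_ball 0 one_ne_zero, mem_closedBall_zero_iff, hζ]
  have hcont : ContinuousWithinAt (fun z => ‖g z‖) (Metric.ball 0 1) ζ :=
    ((hg ζ (by rwa [← closure_ball (0 : ℂ) one_ne_zero])).mono
      Metric.ball_subset_closedBall).norm
  exact csSup_image_eq_of_mem_closure hζ_closure hcont hle hgζ

theorem exists_norm_eq_one_conj_mul_eq_norm (w : ℂ) : ∃ u : ℂ, ‖u‖ = 1 ∧ conj w * u = ‖w‖ := by
  rcases eq_or_ne w 0 with rfl | hw
  · exact ⟨1, by simp, by simp⟩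
  · refine ⟨w / ‖w‖, by simp [hw], ?_⟩
    rw [mul_div_assoc', Complex.conj_mul', div_eq_iff (by simpa using hw)]
    ring

section Mobius

variable (w : ℂ)

noncomputable def discAut (z : ℂ) : ℂ := (w - z) / (1 - conj w * z)

theorem normSq_one_sub_conj_mul_sub_normSq_sub (z : ℂ) :
    Complex.normSq (1 - conj w * z) - Complex.normSq (w - z) =
      (1 - Complex.normSq w) * (1 - Complex.normSq z) := by
  simp only [Complex.normSq_apply, Complex.sub_re, Complex.sub_im, Complex.mul_re,
    Complex.mul_im, Complex.conj_re, Complex.conj_im, Complex.one_re, Complex.one_im]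
  ring

variable {w}

theorem norm_sub_le_norm_one_sub_conj_mul {z : ℂ} (hw : ‖w‖ ≤ 1) (hz : ‖z‖ ≤ 1) :
    ‖w - z‖ ≤ ‖1 - conj w * z‖ := by
  have key := normSq_one_sub_conj_mul_sub_normSq_sub w z
  simp only [← Complex.sq_norm] at key
  have : 0 ≤ (1 - ‖w‖ ^ 2) * (1 - ‖z‖ ^ 2) :=
    mul_nonneg (by nlinarith [norm_nonneg w]) (by nlinarith [norm_nonneg z])
  exact (sq_le_sq₀ (norm_nonneg _) (norm_nonneg _)).mp (by linarith)

theorem norm_sub_eq_norm_one_sub_conj_mul {z : ℂ} (hz : ‖z‖ = 1) :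
    ‖w - z‖ = ‖1 - conj w * z‖ := by
  have key := normSq_one_sub_conj_mul_sub_normSq_sub w z
  simp only [← Complex.sq_norm, hz] at key
  exact (sq_eq_sq₀ (norm_nonneg _) (norm_nonneg _)).mp (by linarith)

theorem one_sub_norm_mul_le_norm_one_sub_conj_mul (z : ℂ) :
    1 - ‖w‖ * ‖z‖ ≤ ‖1 - conj w * z‖ := by
  simpa using norm_sub_norm_le (1 : ℂ) (conj w * z)

theorem one_sub_conj_mul_ne_zero {z : ℂ} (hw : ‖w‖ < 1) (hz : ‖z‖ ≤ 1) :
    1 - conj w * z ≠ 0 := by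
  refine norm_pos_iff.mp (lt_of_lt_of_le ?_ (one_sub_norm_mul_le_norm_one_sub_conj_mul z))
  nlinarith [norm_nonneg w, norm_nonneg z]

theorem hasDerivAt_discAut_zero : HasDerivAt (discAut w) (‖w‖ ^ 2 - 1 : ℂ) 0 := by
  have hnum : HasDerivAt (fun z : ℂ => w - z) (-1) 0 := (hasDerivAt_id 0).const_sub w
  have hden : HasDerivAt (fun z : ℂ => 1 - conj w * z) (-conj w) 0 := by
    simpa using ((hasDerivAt_id (0 : ℂ)).const_mul (conj w)).const_sub 1
  refine (hnum.div hden (by simp)).congr_deriv ?_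
  rw [← Complex.mul_conj']
  simp
  ring

theorem bwdShift_discAut {z : ℂ} (hz : 1 - conj w * z ≠ 0) :
    bwdShift (discAut w) z = (‖w‖ ^ 2 - 1 : ℂ) / (1 - conj w * z) := by
  rcases eq_or_ne z 0 with rfl | hz0
  · simp [bwdShift, hasDerivAt_discAut_zero.deriv]
  · rw [bwdShift, if_neg hz0, discAut, discAut, ← Complex.mul_conj', mul_zero, sub_zero, sub_zero,
      div_one, div_sub' hz, div_div, div_eq_div_iff (mul_ne_zero hz hz0) hz]
    ring

theorem continuousOn_div_one_sub_conj_mul (hw : ‖w‖ < 1) (c : ℂ) :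
    ContinuousOn (fun z => c / (1 - conj w * z)) (Metric.closedBall 0 1) :=
  continuousOn_const.div (by fun_prop) fun z hz =>
    one_sub_conj_mul_ne_zero hw (mem_closedBall_zero_iff.mp hz)

theorem hInfNorm_discAut (hw : ‖w‖ < 1) : hInfNorm (discAut w) = 1 := by
  have hcont : ContinuousOn (discAut w) (Metric.closedBall 0 1) :=
    (continuousOn_const.sub continuousOn_id).div (by fun_prop) fun z hz =>
      one_sub_conj_mul_ne_zero hw (mem_closedBall_zero_iff.mp hz)
  refine hInfNorm_eq_of_norm_eq_on_sphere hcont (fun z hz => ?_) (norm_one : ‖(1 : ℂ)‖ = 1) ?_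
  · rw [discAut, norm_div]
    exact div_le_one_of_le₀ (norm_sub_le_norm_one_sub_conj_mul hw.le
      (mem_ball_zero_iff.mp hz).le) (norm_nonneg _)
  · rw [discAut, norm_div, norm_sub_eq_norm_one_sub_conj_mul norm_one,
      div_self (norm_ne_zero_iff.mpr (one_sub_conj_mul_ne_zero hw norm_one.le))]

theorem hInfNorm_bwdShift_discAut (hw : ‖w‖ < 1) : hInfNorm (bwdShift (discAut w)) = 1 + ‖w‖ := by
  have hformula : ∀ z ∈ Metric.closedBall (0 : ℂ) 1,
      bwdShift (discAut w) z = (‖w‖ ^ 2 - 1 : ℂ) / (1 - conj w * z) := fun z hz =>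
    bwdShift_discAut (one_sub_conj_mul_ne_zero hw (mem_closedBall_zero_iff.mp hz))
  have hnum : ‖(‖w‖ ^ 2 - 1 : ℂ)‖ = (1 - ‖w‖) * (1 + ‖w‖) := by
    rw [← norm_neg, show -((‖w‖ : ℂ) ^ 2 - 1) = ((1 - ‖w‖ ^ 2 : ℝ) : ℂ) by push_cast; ring,
      Complex.norm_real, Real.norm_of_nonneg (by nlinarith [norm_nonneg w])]
    ring
  obtain ⟨u, hu, hwu⟩ := exists_norm_eq_one_conj_mul_eq_norm w
  refine hInfNorm_eq_of_norm_eq_on_sphere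
    ((continuousOn_div_one_sub_conj_mul hw _).congr hformula) (fun z hz => ?_) hu ?_
  · have hz : ‖z‖ ≤ 1 := (mem_ball_zero_iff.mp hz).le
    have hden : 1 - ‖w‖ ≤ ‖1 - conj w * z‖ := by
      nlinarith [one_sub_norm_mul_le_norm_one_sub_conj_mul (w := w) z, norm_nonneg w]
    rw [hformula z (mem_closedBall_zero_iff.mpr hz), norm_div, hnum,
      div_le_iff₀ (by linarith)]
    nlinarith [norm_nonneg w]
  · -- at `u = w/|w|` the denominator is the real number `1 - |w|`
    rw [hformula u (mem_closedBall_zero_iff.mpr hu.le), norm_div, hnum, hwu,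
      show (1 : ℂ) - ‖w‖ = ((1 - ‖w‖ : ℝ) : ℂ) by push_cast; ring, Complex.norm_real,
      Real.norm_of_nonneg (by linarith), mul_div_cancel_left₀ _ (by linarith)]

end Mobius

/-- For the disc automorphism `f(z) = (w - z)/(1 - w̄z)` interchanging `0` and `w`, one has
`Bf(z) = (|w|² - 1)/(1 - w̄z)` on the disc, `‖Bf‖_∞ = 1 + |w|` and `‖f‖_∞ = 1`;
that is, `‖Bf‖_∞ = (1 + |w|)·‖f‖_∞`. -/
theorem backward_shift_of_automorphism (w : ℂ) (hw : w ∈ Metric.ball (0:ℂ) 1)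
    (f : ℂ → ℂ) (hf : ∀ z, f z = (w - z) / (1 - (starRingEnd ℂ) w * z)) :
    (∀ z ∈ Metric.ball (0:ℂ) 1,
        bwdShift f z = (((‖w‖ : ℝ) : ℂ) ^ 2 - 1) / (1 - (starRingEnd ℂ) w * z)) ∧
      hInfNorm (bwdShift f) = 1 + ‖w‖ ∧
      hInfNorm f = 1 ∧
      hInfNorm (bwdShift f) = (1 + ‖w‖) * hInfNorm f := by
  have hw' : ‖w‖ < 1 := mem_ball_zero_iff.mp hw
  obtain rfl : f = discAut w := funext hf
  refine ⟨fun z hz =>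
    bwdShift_discAut (one_sub_conj_mul_ne_zero hw' (mem_ball_zero_iff.mp hz).le),
    hInfNorm_bwdShift_discAut hw', hInfNorm_discAut hw', ?_⟩
  rw [hInfNorm_bwdShift_discAut hw', hInfNorm_discAut hw', mul_one]
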